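/- arXiv:1909.13095 — 7 statements merged into one kernel-verified Lean document; each statement's English description precedes it below -/
import Mathlib

section
/- For every partition ν, the following identity holds in the ring ℤ[x, x⁻¹] of Laurent polynomials: Σ_{i=1}^{ℓ(ν)} (x^{ν_i − i} − x^{−i}) + Σ_{j=1}^{ν_1} (x^{j − νᵀ_j − 1} − x^{j−1}) = 0. -/
/-!
Draw the Young diagram of `ν` inside the box with `ℓ(ν)` rows and `ν₁` columns and label each
unit step of its boundary path by its diagonal. The vertical steps carry the labels `ν_i - i`
and the horizontal steps the labels `j - νᵀ_j - 1`; as the path runs from the bottom-left to the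
top-right corner of the box, these labels run exactly once through the interval
`[-ℓ(ν), ν₁ - 1]`. The empty diagram in the same box gives the labels `-i` and `j - 1`, which
therefore sum to the same Laurent polynomial.
-/

/-- A partition: a non-increasing sequence of non-negative integers
with only finitely many nonzero terms.  `part i` is the part `ν_{i+1}`
(0-based indexing). -/
structure NPartition where
  part : ℕ → ℕ
  antitone : ∀ ⦃i j : ℕ⦄, i ≤ j → part j ≤ part i
  eventually_zero : ∃ N : ℕ, ∀ i : ℕ, N ≤ i → part i = 0

/-- The conjugate partition: `conj f j = #{i ≥ 1 : f_i ≥ j+1}`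
(0-based: this is `(fᵀ)_{j+1}`). -/
noncomputable def conj (f : ℕ → ℕ) (j : ℕ) : ℕ :=
  Nat.card {i : ℕ // j + 1 ≤ f i}

/-- The number of nonzero parts `ℓ(ν)`. -/
noncomputable def plen (f : ℕ → ℕ) : ℕ :=
  Nat.card {i : ℕ // f i ≠ 0}

open Finset

theorem lt_natCard_subtype_iff_of_antitone {P : ℕ → Prop} (hP : Antitone P)
    (hfin : ∃ n, ¬P n) (i : ℕ) : i < Nat.card {i // P i} ↔ P i := by
  classical
  have hP_iff : ∀ k, P k ↔ k < Nat.find hfin := fun k =>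
    ⟨fun hk => lt_of_not_ge fun hle => Nat.find_spec hfin (hP hle hk),
      fun hk => not_not.mp (Nat.find_min hfin hk)⟩
  have hcard : Nat.card {i // P i} = Nat.find hfin := by
    rw [Nat.card_congr (Equiv.subtypeEquivRight hP_iff), ← Nat.card_congr Fin.equivSubtype,
      Nat.card_eq_fintype_card, Fintype.card_fin]
  rw [hcard, hP_iff]

namespace NPartition

variable (ν : NPartition)

theorem lt_plen_iff (i : ℕ) : i < plen ν.part ↔ ν.part i ≠ 0 :=
  lt_natCard_subtype_iff_of_antitone
    (fun _ _ hij hj => fun h0 => hj (Nat.eq_zero_of_le_zero (h0 ▸ ν.antitone hij)))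
    (ν.eventually_zero.imp fun N hN => not_not.mpr (hN N le_rfl))
    i

theorem lt_conj_iff (i j : ℕ) : i < conj ν.part j ↔ j < ν.part i :=
  lt_natCard_subtype_iff_of_antitone
    (fun _ _ hij hj => hj.trans (ν.antitone hij))
    (ν.eventually_zero.imp fun N hN => by simp [hN N le_rfl])
    i

theorem conj_le_plen (j : ℕ) : conj ν.part j ≤ plen ν.part :=
  not_lt.mp fun h => by
    have := (ν.lt_conj_iff _ j).mp h
    have := (ν.lt_plen_iff (plen ν.part)).not.mp (lt_irrefl _)
    omega

end NPartition

/-- For the diagram with row lengths `f` and column lengths `c`, `inl i` is the vertical boundary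
step of row `i` and `inr j` the horizontal boundary step of column `j` (0-based), each labelled by
its diagonal. -/
def boxLabel (f c : ℕ → ℕ) : ℕ ⊕ ℕ → ℤ :=
  Sum.elim (fun i => (f i : ℤ) - i - 1) (fun j => (j : ℤ) - c j)

section BoxLabel

variable {L m : ℕ} {f c : ℕ → ℕ}

theorem injOn_boxLabel (hf : ∀ i < L, f i ≤ m) (hc : ∀ j < m, c j ≤ L)
    (hfc : ∀ i < L, ∀ j < m, i < c j ↔ j < f i) :
    Set.InjOn (boxLabel f c) ((range L).disjSum (range m) : Finset (ℕ ⊕ ℕ)) := by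
  have rows : StrictAntiOn (fun i : ℕ => (f i : ℤ) - i) (Set.Iio L) := by
    intro i hi i' hi' hii'
    by_contra! hle
    -- otherwise column `f i` would reach row `i'` but not row `i`
    have hj : f i < m := by have := hf i' hi'; omega
    have := (hfc i hi (f i) hj).mp (by have := (hfc i' hi' (f i) hj).mpr (by omega); omega)
    omega
  have cols : StrictMonoOn (fun j : ℕ => (j : ℤ) - c j) (Set.Iio m) := by
    intro j hj j' hj' hjj'
    by_contra! hle
    -- otherwise row `c j` would reach column `j'` but not column `j`
    have hi : c j < L := by have := hc j' hj'; omega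
    have := (hfc (c j) hi j hj).mpr (by have := (hfc (c j) hi j' hj').mp (by omega); omega)
    omega
  have mixed : ∀ i < L, ∀ j < m, (f i : ℤ) - i - 1 ≠ j - c j := by
    intro i hi j hj
    have := hfc i hi j hj
    by_cases hij : i < c j <;> omega
  rintro (i | j) hx (i' | j') hy hxy <;>
    simp only [mem_coe, inl_mem_disjSum, inr_mem_disjSum, mem_range] at hx hy <;>
    simp only [boxLabel, Sum.elim_inl, Sum.elim_inr] at hxy
  · exact congrArg Sum.inl (rows.injOn hx hy (by omega))
  · exact absurd hxy (mixed i hx j' hy)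
  · exact absurd hxy.symm (mixed i' hy j hx)
  · exact congrArg Sum.inr (cols.injOn hx hy hxy)

theorem mapsTo_boxLabel (hf : ∀ i < L, f i ≤ m) (hc : ∀ j < m, c j ≤ L) :
    Set.MapsTo (boxLabel f c) ((range L).disjSum (range m) : Finset (ℕ ⊕ ℕ))
      (Icc (-(L : ℤ)) (m - 1) : Finset ℤ) := by
  rintro (i | j) hx <;>
    simp only [mem_coe, inl_mem_disjSum, inr_mem_disjSum, mem_range] at hx <;>
    simp only [boxLabel, Sum.elim_inl, Sum.elim_inr, mem_coe, mem_Icc]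
  · have := hf i hx; omega
  · have := hc j hx; omega

theorem sum_boxLabel {M : Type*} [AddCommMonoid M] (g : ℤ → M)
    (hf : ∀ i < L, f i ≤ m) (hc : ∀ j < m, c j ≤ L)
    (hfc : ∀ i < L, ∀ j < m, i < c j ↔ j < f i) :
    ∑ i ∈ range L, g ((f i : ℤ) - i - 1) + ∑ j ∈ range m, g ((j : ℤ) - c j) =
      ∑ k ∈ Icc (-(L : ℤ)) (m - 1), g k := by
  have hcard : #(Icc (-(L : ℤ)) (m - 1)) ≤ #((range L).disjSum (range m)) := by
    simp only [Int.card_Icc, card_disjSum, card_range]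
    omega
  have hmaps := mapsTo_boxLabel hf hc
  have hinj := injOn_boxLabel hf hc hfc
  calc _ = ∑ x ∈ (range L).disjSum (range m), g (boxLabel f c x) := (sum_disjSum ..).symm
    _ = _ := sum_nbij _ hmaps hinj (surjOn_of_injOn_of_card_le _ hmaps hinj hcard) fun _ _ => rfl

end BoxLabel

open LaurentPolynomial in
/-- In ℤ[x, x⁻¹]:
`Σ_{i=1}^{ℓ(ν)} (x^{ν_i − i} − x^{−i}) + Σ_{j=1}^{ν_1} (x^{j − νᵀ_j − 1} − x^{j−1}) = 0`
(written with 0-based indexing, `T n = x^n`). -/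
theorem laurent_beta_identity (ν : NPartition) :
    (∑ i ∈ Finset.range (plen ν.part),
        (T ((ν.part i : ℤ) - (i : ℤ) - 1) - T (-(i : ℤ) - 1))) +
    (∑ j ∈ Finset.range (ν.part 0),
        (T ((j : ℤ) - (conj ν.part j : ℤ)) - T (j : ℤ)))
      = (0 : LaurentPolynomial ℤ) := by
  have hν := sum_boxLabel (T (R := ℤ)) (fun i _ => ν.antitone (Nat.zero_le i))
    (fun j _ => ν.conj_le_plen j) (fun i _ j _ => ν.lt_conj_iff i j)
  have hempty := sum_boxLabel (T (R := ℤ)) (L := plen ν.part) (m := ν.part 0) (f := 0) (c := 0)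
    (fun _ _ => Nat.zero_le _) (fun _ _ => Nat.zero_le _) (fun _ _ _ _ => by simp)
  simp only [Pi.zero_apply, Nat.cast_zero, zero_sub, sub_zero] at hempty
  rw [sum_sub_distrib, sum_sub_distrib]
  linear_combination hν - hempty
end

section
/- For all partitions ν, ν̄, the two-leg topological vertex satisfies the inversion symmetry W_{ν ν̄}(w) = (−1)^{|ν|+|ν̄|} ι(W_{νᵀ ν̄ᵀ}(w)), where ι is the field automorphism of ℚ(w) with ι(w) = w^{−1}. In the variable q = w² this reads W_{ν ν̄}(q) = (−1)^{|ν|+|ν̄|} W_{νᵀ ν̄ᵀ}(q^{−1}). -/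
/-- The weight `|μ| = Σ_i μ_i`. -/
noncomputable def wsum (f : ℕ → ℕ) : ℕ := ∑ᶠ i : ℕ, f i

/-- The complete homogeneous generators `h_m ∈ ℚ[p_1, p_2, …]`
(with `p_k` the variable `X (k-1)`), characterized by `h_0 = 1` and the
Newton-type recursion `(m+1) h_{m+1} = Σ_{k=1}^{m+1} p_k h_{m+1-k}`, which is
equivalent (over ℚ) to `Σ_{m≥0} h_m z^m = exp(Σ_{k≥1} (p_k/k) z^k)`. -/
noncomputable def hp : ℕ → MvPolynomial ℕ ℚ
  | 0 => 1
  | m + 1 =>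
      ((m : ℚ) + 1)⁻¹ • ∑ k ∈ Finset.range (m + 1), MvPolynomial.X k * hp (m - k)
  decreasing_by exact Nat.lt_succ_of_le (Nat.sub_le m k)

/-- `h_m` for `m ∈ ℤ`, with `h_m = 0` for `m < 0`. -/
noncomputable def hInt (m : ℤ) : MvPolynomial ℕ ℚ :=
  if 0 ≤ m then hp m.toNat else 0

/-- The skew Jacobi–Trudi determinant
`S_{μ/ν} = det(h_{μ_i − ν_j − i + j})_{1 ≤ i,j ≤ n}` (0-based indexing of parts). -/
noncomputable def Sdet (f g : ℕ → ℕ) (n : ℕ) : MvPolynomial ℕ ℚ :=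
  Matrix.det (Matrix.of fun i j : Fin n =>
    hInt ((f i : ℤ) - (g j : ℤ) - (i : ℤ) + (j : ℤ)))


/-- `κ(ν) = Σ_{i ≥ 1} ν_i (ν_i - 2 i + 1)`, written with 0-based indexing. -/
noncomputable def kappa (f : ℕ → ℕ) : ℤ :=
  ∑ᶠ i : ℕ, (f i : ℤ) * ((f i : ℤ) - 2 * (i : ℤ) - 1)

/-- The specialization `p_k = 1/(w^k − w^{−k})` in `ℚ(w)`
(the variable `X m` of `ℚ[p_1, p_2, …]` stands for `p_{m+1}`). -/
noncomputable def Pspec (m : ℕ) : RatFunc ℚ :=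
  ((RatFunc.X : RatFunc ℚ) ^ ((m : ℤ) + 1) - RatFunc.X ^ (-((m : ℤ) + 1)))⁻¹

/-- The skew Schur polynomial `S_{f/g}` (Jacobi–Trudi determinant of size n)
evaluated at `p_k = 1/(w^k − w^{−k})`. -/
noncomputable def Seval (f g : ℕ → ℕ) (n : ℕ) : RatFunc ℚ :=
  MvPolynomial.aeval Pspec (Sdet f g n)

/-- The two-leg topological vertex
`W_{ν ν̄}(w) = w^{κ(ν)+κ(ν̄)} Σ_η S_{νᵀ/η}(P) S_{ν̄ᵀ/η}(P)`,
the sum ranging over partitions η (only the finitely many η contained in both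
νᵀ and ν̄ᵀ contribute, the other skew Schur determinants being zero).  The
determinant size is taken large enough for every η. -/
noncomputable def Wtl (f g : ℕ → ℕ) : RatFunc ℚ :=
  (RatFunc.X : RatFunc ℚ) ^ (kappa f + kappa g) *
    ∑ᶠ η : NPartition,
      Seval (conj f) η.part (max (f 0) (max (g 0) (plen η.part))) *
      Seval (conj g) η.part (max (f 0) (max (g 0) (plen η.part)))

open Finset

structure IsPartition (f : ℕ → ℕ) : Prop where
  antitone : Antitone f
  eventually_zero : ∃ N, ∀ i, N ≤ i → f i = 0

lemma NPartition.isPartition (η : NPartition) : IsPartition η.part :=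
  ⟨η.antitone, η.eventually_zero⟩

lemma NPartition.ext {η θ : NPartition} (h : η.part = θ.part) : η = θ := by
  cases η; cases θ; cases h; rfl

lemma isPartition_zero : IsPartition 0 := ⟨antitone_const, 0, fun _ _ => rfl⟩

lemma plen_eq_conj_zero (f : ℕ → ℕ) : plen f = conj f 0 :=
  Nat.card_congr (Equiv.subtypeEquivRight fun _ => Nat.pos_iff_ne_zero.symm)

namespace IsPartition

variable {f : ℕ → ℕ}

lemma setOf_lt_eq_Iio (hf : IsPartition f) (j : ℕ) : {i | j < f i} = Set.Iio (conj f j) := by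
  have hlower : IsLowerSet {i | j < f i} := fun _ _ hba ha => lt_of_lt_of_le ha (hf.antitone hba)
  obtain huniv | ⟨a, ha⟩ := hlower.eq_univ_or_Iio
  · obtain ⟨N, hN⟩ := hf.eventually_zero
    have hN' : N ∈ {i | j < f i} := huniv ▸ Set.mem_univ N
    simp [hN N le_rfl] at hN'
  · have hcard : conj f j = a := by
      rw [conj, ← Nat.card_fin a]
      exact Nat.card_congr
        ((Equiv.subtypeEquivRight fun i => Set.ext_iff.mp ha i).trans Fin.equivSubtype.symm)
    rw [ha, hcard]

lemma lt_conj_iff (hf : IsPartition f) {i j : ℕ} : j < f i ↔ i < conj f j :=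
  Set.ext_iff.mp (hf.setOf_lt_eq_Iio j) i

lemma conj_eq_of_forall_lt_iff (hf : IsPartition f) {j c : ℕ} (h : ∀ i, j < f i ↔ i < c) :
    conj f j = c :=
  eq_of_forall_lt_iff fun i => (hf.lt_conj_iff).symm.trans (h i)

lemma conj_antitone (hf : IsPartition f) : Antitone (conj f) := by
  intro j j' hjj'
  by_contra! h
  have := hf.lt_conj_iff.mpr h
  have := hf.lt_conj_iff.mp (lt_of_le_of_lt hjj' this)
  omega

lemma conj_eq_zero (hf : IsPartition f) {j : ℕ} (hj : f 0 ≤ j) : conj f j = 0 := by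
  by_contra h
  have := hf.lt_conj_iff.mpr (Nat.pos_of_ne_zero h)
  omega

lemma conjugate (hf : IsPartition f) : IsPartition (conj f) :=
  ⟨hf.conj_antitone, f 0, fun _ => hf.conj_eq_zero⟩

lemma conj_conj (hf : IsPartition f) : conj (conj f) = f := by
  funext i
  apply eq_of_forall_lt_iff
  intro j
  rw [← hf.conjugate.lt_conj_iff, hf.lt_conj_iff]

lemma lt_plen_iff (hf : IsPartition f) {i : ℕ} : i < plen f ↔ 0 < f i := by
  rw [plen_eq_conj_zero, hf.lt_conj_iff]

lemma eq_zero_of_plen_le (hf : IsPartition f) {i : ℕ} (hi : plen f ≤ i) : f i = 0 :=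
  Nat.eq_zero_of_not_pos (mt hf.lt_plen_iff.mpr (not_lt.mpr hi))

lemma conj_le_plen (hf : IsPartition f) (j : ℕ) : conj f j ≤ plen f :=
  plen_eq_conj_zero f ▸ hf.conj_antitone (Nat.zero_le j)

end IsPartition

lemma plen_zero : plen 0 = 0 :=
  (plen_eq_conj_zero 0).trans (isPartition_zero.conj_eq_zero le_rfl)

section WeightAndContent

variable {f : ℕ → ℕ} {N : ℕ}

lemma wsum_eq_sum_range (hN : ∀ i, N ≤ i → f i = 0) : wsum f = ∑ i ∈ range N, f i :=
  finsum_eq_sum_of_support_subset f fun i hi => by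
    by_contra h
    exact hi (hN i (by simpa using h))

lemma kappa_eq_sum_range (hN : ∀ i, N ≤ i → f i = 0) :
    kappa f = ∑ i ∈ range N, (f i : ℤ) * ((f i : ℤ) - 2 * (i : ℤ) - 1) :=
  finsum_eq_sum_of_support_subset _ fun i hi => by
    by_contra h
    exact hi (by simp [hN i (by simpa using h)])

lemma IsPartition.kappa_eq_two_mul_sum_content (hf : IsPartition f)
    (hN : ∀ i, N ≤ i → f i = 0) (hf0 : f 0 ≤ N) :
    kappa f = 2 * ∑ p ∈ (range N ×ˢ range N).filter (fun p => p.2 < f p.1),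
      ((p.2 : ℤ) - p.1) := by
  rw [kappa_eq_sum_range hN, sum_filter, sum_product, mul_sum]
  refine sum_congr rfl fun i _ => ?_
  have hrow : (range N).filter (· < f i) = range (f i) := by
    ext j
    simp only [mem_filter, mem_range]
    have := hf.antitone (Nat.zero_le i)
    omega
  have hgauss : ∀ n : ℕ, (∑ j ∈ range n, (j : ℤ)) * 2 = n * (n - 1) := fun n => by
    induction n with
    | zero => simp
    | succ n ih => rw [sum_range_succ, add_mul, ih]; push_cast; ring
  rw [← sum_filter, hrow]
  simp only [sum_sub_distrib, sum_const, card_range, nsmul_eq_mul]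
  linear_combination -hgauss (f i)

lemma IsPartition.kappa_conj (hf : IsPartition f) : kappa (conj f) = -kappa f := by
  obtain ⟨N₀, hN₀⟩ := hf.eventually_zero
  set N := max N₀ (max (f 0) (plen f))
  have hf0 : conj f 0 ≤ N := by rw [← plen_eq_conj_zero]; omega
  rw [hf.kappa_eq_two_mul_sum_content (N := N) (fun i hi => hN₀ i (by omega)) (by omega),
    hf.conjugate.kappa_eq_two_mul_sum_content (fun j hj => hf.conj_eq_zero (by omega)) hf0,
    ← mul_neg, ← sum_neg_distrib]
  congr 1
  refine sum_nbij' Prod.swap Prod.swap ?_ ?_ (fun _ _ => rfl) (fun _ _ => rfl)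
    (fun _ _ => by simp)
  all_goals
    rintro ⟨a, b⟩ h
    simp only [mem_filter, mem_product, mem_range, Prod.swap] at h ⊢
  · exact ⟨h.1.symm, hf.lt_conj_iff.mpr h.2⟩
  · exact ⟨h.1.symm, hf.lt_conj_iff.mp h.2⟩

end WeightAndContent

namespace MvPolynomial

variable {σ R : Type*} [CommRing R]

noncomputable def negVars : MvPolynomial σ R →ₐ[R] MvPolynomial σ R := aeval fun k => -X k

@[simp] lemma negVars_X (k : σ) : negVars (X k : MvPolynomial σ R) = -X k := aeval_X _ _

lemma negVars_negVars (p : MvPolynomial σ R) : negVars (negVars p) = p := by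
  change (negVars.comp negVars) p = AlgHom.id R _ p
  congr 1
  ext k
  simp

lemma aeval_negVars {A : Type*} [CommRing A] [Algebra R A] (x : σ → A) (p : MvPolynomial σ R) :
    aeval x (negVars p) = aeval (-x) p := by
  change ((aeval x).comp negVars) p = aeval (-x) p
  congr 1
  ext k
  simp

end MvPolynomial

namespace PowerSeries

lemma derivative_map {R S : Type*} [CommSemiring R] [CommSemiring S] (φ : R →+* S)
    (F : R⟦X⟧) : d⁄dX S (map φ F) = map φ (d⁄dX R F) := by
  ext n
  simp [coeff_derivative]

end PowerSeries

open PowerSeries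
open MvPolynomial (negVars)

lemma hp_zero : hp 0 = 1 := by rw [hp]

noncomputable def hSeries : PowerSeries (MvPolynomial ℕ ℚ) := PowerSeries.mk hp

noncomputable def pSeries : PowerSeries (MvPolynomial ℕ ℚ) := PowerSeries.mk MvPolynomial.X

lemma derivative_hSeries : d⁄dX _ hSeries = pSeries * hSeries := by
  refine PowerSeries.ext fun m => ?_
  rw [coeff_derivative, PowerSeries.coeff_mul, Finset.Nat.sum_antidiagonal_eq_sum_range_succ_mk]
  simp only [hSeries, pSeries, coeff_mk]
  rw [hp, mul_comm, ← Nat.cast_succ, ← nsmul_eq_mul, ← Nat.cast_smul_eq_nsmul ℚ]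
  push_cast
  rw [smul_smul, mul_inv_cancel₀ (by positivity), one_smul]

lemma map_negVars_hSeries_mul_hSeries :
    map (negVars : MvPolynomial ℕ ℚ →ₐ[ℚ] _).toRingHom hSeries * hSeries = 1 := by
  have hmap : map (negVars : MvPolynomial ℕ ℚ →ₐ[ℚ] _).toRingHom pSeries = -pSeries := by
    ext k : 1
    simp [pSeries]
  apply derivative.ext
  · rw [Derivation.leibniz, derivative_map, derivative_hSeries, map_mul, hmap, derivative_one]
    simp only [smul_eq_mul]
    ring
  · rw [map_mul, ← coeff_zero_eq_constantCoeff_apply, ← coeff_zero_eq_constantCoeff_apply,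
      coeff_map, hSeries, coeff_mk, hp_zero, map_one, one_mul, map_one]

namespace PowerSeries

variable {R : Type*}

noncomputable def upperToeplitz [Semiring R] (F : R⟦X⟧) (N : ℕ) : Matrix (Fin N) (Fin N) R :=
  Matrix.of fun a b => if a ≤ b then coeff ((b : ℕ) - a) F else 0

lemma upperToeplitz_mul [CommSemiring R] (F G : R⟦X⟧) (N : ℕ) :
    upperToeplitz F N * upperToeplitz G N = upperToeplitz (F * G) N := by
  ext a d
  simp only [upperToeplitz, Matrix.mul_apply, Matrix.of_apply, ite_zero_mul_ite_zero,
    ← Finset.sum_filter]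
  split_ifs with had
  · rw [coeff_mul]
    refine Finset.sum_bij' (fun c _ => ((c : ℕ) - a, (d : ℕ) - c))
      (fun p hp => ⟨a + p.1, by have := Finset.HasAntidiagonal.mem_antidiagonal.mp hp; omega⟩)
      ?_ ?_ ?_ ?_ ?_
    all_goals
      intro _ h
      simp only [Finset.mem_filter, Finset.mem_univ, true_and,
        Finset.HasAntidiagonal.mem_antidiagonal] at h ⊢
    · omega
    · simp only [Fin.le_def]
      omega
    · ext
      simp only
      omega
    · ext <;> simp only <;> omega
  · refine Finset.sum_eq_zero fun c hc => absurd ?_ had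
    simp only [Finset.mem_filter] at hc
    exact hc.2.1.trans hc.2.2

lemma upperToeplitz_one [Semiring R] (N : ℕ) : upperToeplitz (1 : R⟦X⟧) N = 1 := by
  ext a b
  simp only [upperToeplitz, Matrix.of_apply, coeff_one, Matrix.one_apply]
  split_ifs <;> first | rfl | omega

lemma det_upperToeplitz [CommRing R] (F : R⟦X⟧) (N : ℕ) :
    (upperToeplitz F N).det = constantCoeff F ^ N := by
  rw [Matrix.det_of_isUpperTriangular]
  · simp [upperToeplitz]
  · intro a b hba
    have hab : ¬a ≤ b := not_le.mpr hba
    simp [upperToeplitz, hab]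

end PowerSeries

namespace Matrix

variable {R : Type*} [CommRing R] {l n : Type*} [Fintype l] [Fintype n] [DecidableEq l]
  [DecidableEq n]

/-- Jacobi's complementary minor identity, for `Q = P⁻¹`. -/
lemma det_mul_det_toBlocks₁₁_of_mul_eq_one {P Q : Matrix (l ⊕ n) (l ⊕ n) R} (h : P * Q = 1) :
    P.det * Q.toBlocks₁₁.det = P.toBlocks₂₂.det := by
  rw [← fromBlocks_toBlocks P, ← fromBlocks_toBlocks Q, fromBlocks_multiply,
    ← fromBlocks_one, fromBlocks_inj] at h
  have key : fromBlocks P.toBlocks₁₁ P.toBlocks₁₂ P.toBlocks₂₁ P.toBlocks₂₂ *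
      fromBlocks Q.toBlocks₁₁ 0 Q.toBlocks₂₁ 1 =
        fromBlocks 1 P.toBlocks₁₂ 0 P.toBlocks₂₂ := by
    simp [fromBlocks_multiply, h.1, h.2.2.1]
  simpa [det_fromBlocks_zero₁₂, det_fromBlocks_zero₂₁, fromBlocks_toBlocks] using
    congrArg det key

variable {m : Type*} [Fintype m] [DecidableEq m]

lemma det_submatrix_equiv (A : Matrix m m R) (e g : n ≃ m) :
    (A.submatrix e g).det = Equiv.Perm.sign (e.symm.trans g) * A.det := by
  have : A.submatrix e g = (A.submatrix id (e.symm.trans g : Equiv.Perm m)).submatrix e e := by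
    ext i j
    simp
  rw [this, det_submatrix_equiv_self, det_permute']

end Matrix

lemma Equiv.eq_trans_swap_of_apply {α β : Type*} [DecidableEq β] {e e' : α ≃ β} {a b : α}
    (ha : e' a = e b) (hb : e' b = e a) (h : ∀ z, z ≠ a → z ≠ b → e' z = e z) :
    e' = e.trans (Equiv.swap (e a) (e b)) := by
  ext z
  by_cases hza : z = a
  · simp [hza, ha]
  by_cases hzb : z = b
  · simp [hzb, hb]
  rw [Equiv.trans_apply, Equiv.swap_apply_of_ne_of_ne (e.injective.ne hza) (e.injective.ne hzb),
    h z hza hzb]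

section Maya

variable {f : ℕ → ℕ} {n m : ℕ}

def rowPos (f : ℕ → ℕ) (n i : ℕ) : ℕ := f i + (n - 1 - i)

noncomputable def colPos (f : ℕ → ℕ) (n j : ℕ) : ℕ := j + (n - conj f j)

lemma IsPartition.rowPos_lt (hf : IsPartition f) (hm : f 0 ≤ m) {i : ℕ} (hi : i < n) :
    rowPos f n i < n + m := by
  have := hf.antitone (Nat.zero_le i)
  unfold rowPos
  omega

lemma colPos_lt {j : ℕ} (hj : j < m) : colPos f n j < n + m := by
  unfold colPos
  omega

lemma IsPartition.rowPos_injOn (hf : IsPartition f) {i i' : ℕ} (hi : i < n) (hi' : i' < n)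
    (h : rowPos f n i = rowPos f n i') : i = i' := by
  rcases le_total i i' with hii' | hii' <;>
  · have := hf.antitone hii'
    unfold rowPos at h
    omega

lemma IsPartition.colPos_injective (hf : IsPartition f) (hn : plen f ≤ n) :
    Function.Injective (colPos f n) := by
  intro j j' h
  have := hf.conj_le_plen j
  have := hf.conj_le_plen j'
  rcases le_total j j' with hjj' | hjj' <;>
  · have := hf.conj_antitone hjj'
    unfold colPos at h
    omega

lemma IsPartition.rowPos_ne_colPos (hf : IsPartition f) (hn : plen f ≤ n) {i : ℕ} (hi : i < n)
    (j : ℕ) : rowPos f n i ≠ colPos f n j := by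
  have := hf.conj_le_plen j
  by_cases hij : j < f i
  · have := hf.lt_conj_iff.mp hij
    unfold rowPos colPos
    omega
  · have := mt hf.lt_conj_iff.mpr hij
    unfold rowPos colPos
    omega

noncomputable def mayaEquiv (f : ℕ → ℕ) (n m : ℕ) (hf : IsPartition f) (hn : plen f ≤ n)
    (hm : f 0 ≤ m) : Fin n ⊕ Fin m ≃ Fin (n + m) :=
  Equiv.ofBijective
    (Sum.elim (fun i => ⟨rowPos f n i, hf.rowPos_lt hm i.isLt⟩)
      (fun j => ⟨colPos f n j, colPos_lt j.isLt⟩))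
    ((Fintype.bijective_iff_injective_and_card _).mpr ⟨by
      rintro (i | j) (i' | j') h <;> simp only [Sum.elim_inl, Sum.elim_inr, Fin.mk.injEq] at h
      · exact congrArg Sum.inl (Fin.ext (hf.rowPos_injOn i.isLt i'.isLt h))
      · exact absurd h (hf.rowPos_ne_colPos hn i.isLt j')
      · exact absurd h.symm (hf.rowPos_ne_colPos hn i'.isLt j)
      · exact congrArg Sum.inr (Fin.ext (hf.colPos_injective hn h)), by simp⟩)

@[simp] lemma mayaEquiv_inl (hf : IsPartition f) (hn : plen f ≤ n) (hm : f 0 ≤ m) (i : Fin n) :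
    (mayaEquiv f n m hf hn hm (.inl i) : ℕ) = rowPos f n i := rfl

@[simp] lemma mayaEquiv_inr (hf : IsPartition f) (hn : plen f ≤ n) (hm : f 0 ≤ m) (j : Fin m) :
    (mayaEquiv f n m hf hn hm (.inr j) : ℕ) = colPos f n j := rfl

end Maya

section RemoveLastCell

open Function

variable {f : ℕ → ℕ} {r : ℕ}

lemma IsPartition.pos_of_plen_eq_succ (hf : IsPartition f) (hr : plen f = r + 1) : 0 < f r :=
  hf.lt_plen_iff.mp (by omega)

lemma IsPartition.update_last (hf : IsPartition f) (hr : plen f = r + 1) :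
    IsPartition (update f r (f r - 1)) := by
  have hzero : ∀ i, r < i → f i = 0 := fun i hi => hf.eq_zero_of_plen_le (by omega)
  refine ⟨fun i j hij => ?_, plen f, fun i hi => ?_⟩
  · have := hf.antitone hij
    simp only [update_apply]
    split_ifs with hj hi hi
    · omega
    · subst hj; omega
    · subst hi; have := hzero j (by omega); omega
    · omega
  · rw [update_of_ne (by omega), hf.eq_zero_of_plen_le hi]

lemma IsPartition.conj_pred_last (hf : IsPartition f) (hr : plen f = r + 1) :
    conj f (f r - 1) = r + 1 := by
  have hpos := hf.pos_of_plen_eq_succ hr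
  refine hf.conj_eq_of_forall_lt_iff fun i => ⟨fun h => ?_, fun h => ?_⟩
  · by_contra! hi
    rw [hf.eq_zero_of_plen_le (i := i) (by omega)] at h
    omega
  · have := hf.antitone (Nat.le_of_lt_succ h)
    omega

lemma IsPartition.conj_update_last (hf : IsPartition f) (hr : plen f = r + 1) (j : ℕ) :
    conj (update f r (f r - 1)) j = if j = f r - 1 then r else conj f j := by
  have hpos := hf.pos_of_plen_eq_succ hr
  refine (hf.update_last hr).conj_eq_of_forall_lt_iff fun i => ?_
  by_cases hj : j = f r - 1
  · rw [if_pos hj, hj]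
    rcases lt_trichotomy i r with hir | rfl | hir
    · have := hf.antitone hir.le
      rw [update_of_ne hir.ne]
      omega
    · simp
    · rw [update_of_ne hir.ne', hf.eq_zero_of_plen_le (i := i) (by omega)]
      omega
  · rw [if_neg hj, ← hf.lt_conj_iff]
    by_cases hir : i = r
    · rw [hir, update_self]
      omega
    · rw [update_of_ne hir]

lemma IsPartition.wsum_update_last (hf : IsPartition f) (hr : plen f = r + 1) :
    wsum (update f r (f r - 1)) + 1 = wsum f := by
  have hpos := hf.pos_of_plen_eq_succ hr
  rw [wsum_eq_sum_range (N := r + 1) fun i hi => hf.eq_zero_of_plen_le (by omega),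
    wsum_eq_sum_range (N := r + 1) fun i hi => by
      rw [update_of_ne (by omega), hf.eq_zero_of_plen_le (by omega)],
    Finset.sum_range_succ, Finset.sum_range_succ, update_self,
    Finset.sum_congr rfl fun i hi => update_of_ne (Finset.mem_range.mp hi).ne _ _]
  omega

end RemoveLastCell

section MayaSign

open Function

variable {f : ℕ → ℕ} {n m r : ℕ}

lemma IsPartition.mayaEquiv_update_last (hf : IsPartition f) (hr : plen f = r + 1)
    (hn : plen f ≤ n) (hm : f 0 ≤ m) (hn' : plen (update f r (f r - 1)) ≤ n)
    (hm' : update f r (f r - 1) 0 ≤ m) :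
    mayaEquiv (update f r (f r - 1)) n m (hf.update_last hr) hn' hm' =
      (mayaEquiv f n m hf hn hm).trans
        (Equiv.swap (mayaEquiv f n m hf hn hm (.inl ⟨r, by omega⟩))
          (mayaEquiv f n m hf hn hm (.inr ⟨f r - 1, by
            have := hf.antitone r.zero_le; have := hf.pos_of_plen_eq_succ hr; omega⟩))) := by
  have hpos := hf.pos_of_plen_eq_succ hr
  have hcol := hf.conj_update_last hr
  have hlast := hf.conj_pred_last hr
  refine Equiv.eq_trans_swap_of_apply ?_ ?_ ?_
  · ext
    simp only [mayaEquiv_inl, mayaEquiv_inr, rowPos, colPos, update_self, hlast]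
    omega
  · ext
    simp only [mayaEquiv_inl, mayaEquiv_inr, rowPos, colPos, hcol, if_pos]
    omega
  · rintro (i | j) hi hj <;> ext
    · have : (i : ℕ) ≠ r := fun h => hi (congrArg Sum.inl (Fin.ext h))
      simp [rowPos, update_of_ne this]
    · have : (j : ℕ) ≠ f r - 1 := fun h => hj (congrArg Sum.inr (Fin.ext h))
      simp [colPos, hcol, this]

theorem IsPartition.sign_mayaEquiv (hf : IsPartition f) (hn : plen f ≤ n) (hm : f 0 ≤ m) :
    Equiv.Perm.sign
      ((mayaEquiv 0 n m isPartition_zero (plen_zero ▸ n.zero_le) m.zero_le).symm.trans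
        (mayaEquiv f n m hf hn hm)) = (-1) ^ wsum f := by
  induction hw : wsum f generalizing f with
  | zero =>
    obtain rfl : f = 0 := by
      obtain ⟨N, hN⟩ := hf.eventually_zero
      rw [wsum_eq_sum_range hN, Finset.sum_eq_zero_iff] at hw
      funext i
      by_cases hi : i < N
      · exact hw i (Finset.mem_range.mpr hi)
      · exact hN i (not_lt.mp hi)
    simp
  | succ W ih =>
    obtain ⟨r, hr⟩ : ∃ r, plen f = r + 1 := Nat.exists_eq_succ_of_ne_zero fun h0 => by
      have : f = 0 := funext fun i => hf.eq_zero_of_plen_le (h0 ▸ i.zero_le)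
      simp [this, wsum] at hw
    have hn' : plen (update f r (f r - 1)) ≤ n := by
      rw [plen_eq_conj_zero, hf.conj_update_last hr, ← plen_eq_conj_zero]
      split_ifs <;> omega
    have hm' : update f r (f r - 1) 0 ≤ m := by
      have := hf.antitone r.zero_le
      rw [update_apply]
      split_ifs <;> omega
    have hstep := ih (hf.update_last hr) hn' hm' (by have := hf.wsum_update_last hr; omega)
    rw [hf.mayaEquiv_update_last hr hn hm, ← Equiv.trans_assoc, Equiv.Perm.sign_trans,
      Equiv.Perm.sign_swap ((mayaEquiv f n m hf hn hm).injective.ne Sum.inl_ne_inr)] at hstep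
    rw [pow_succ, ← hstep, mul_comm, ← mul_assoc, Int.units_mul_self, one_mul]

lemma IsPartition.sign_mayaEquiv_symm_trans {g : ℕ → ℕ} (hf : IsPartition f)
    (hg : IsPartition g) (hfn : plen f ≤ n) (hgn : plen g ≤ n) (hfm : f 0 ≤ m) (hgm : g 0 ≤ m) :
    Equiv.Perm.sign ((mayaEquiv f n m hf hfn hfm).symm.trans (mayaEquiv g n m hg hgn hgm)) =
      (-1) ^ (wsum f + wsum g) := by
  set ρ₀ := mayaEquiv 0 n m isPartition_zero (plen_zero ▸ n.zero_le) m.zero_le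
  have : (mayaEquiv f n m hf hfn hfm).symm.trans (mayaEquiv g n m hg hgn hgm) =
      (ρ₀.symm.trans (mayaEquiv f n m hf hfn hfm)).symm.trans
        (ρ₀.symm.trans (mayaEquiv g n m hg hgn hgm)) := by
    ext
    simp
  rw [this, Equiv.Perm.sign_trans, Equiv.Perm.sign_symm, hf.sign_mayaEquiv, hg.sign_mayaEquiv,
    pow_add, mul_comm]

end MayaSign

lemma neg_one_pow_mul_neg_one_pow_mul {R : Type*} [Monoid R] [HasDistribNeg R] (k : ℕ) (a : R) :
    (-1) ^ k * ((-1) ^ k * a) = a := by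
  rw [← mul_assoc, ← pow_add, ← two_mul, pow_mul, neg_one_sq, one_pow, one_mul]

section Duality

open Matrix
open MvPolynomial (negVars negVars_negVars)

lemma hInt_natCast_sub (a b : ℕ) : hInt ((b : ℤ) - a) = if a ≤ b then hp (b - a) else 0 := by
  unfold hInt
  split_ifs <;> first | omega | rfl | (congr 1; omega)

lemma upperToeplitz_hSeries_apply {N : ℕ} (a b : Fin N) :
    upperToeplitz hSeries N a b = hInt ((b : ℕ) - (a : ℕ) : ℤ) := by
  simp only [upperToeplitz, of_apply, hInt_natCast_sub, Fin.le_def, hSeries, coeff_mk]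

lemma upperToeplitz_map_negVars_hSeries_apply {N : ℕ} (a b : Fin N) :
    upperToeplitz (map (negVars : MvPolynomial ℕ ℚ →ₐ[ℚ] _).toRingHom hSeries) N a b =
      negVars (hInt ((b : ℕ) - (a : ℕ) : ℤ)) := by
  simp only [upperToeplitz, of_apply, hInt_natCast_sub, Fin.le_def, hSeries, coeff_mk,
    coeff_map, apply_ite negVars, map_zero]
  rfl

variable {f g : ℕ → ℕ} {n m : ℕ}

theorem IsPartition.negVars_Sdet (hf : IsPartition f) (hg : IsPartition g)
    (hfn : plen f ≤ n) (hgn : plen g ≤ n) (hfm : f 0 ≤ m) (hgm : g 0 ≤ m) :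
    negVars (Sdet f g n) = (-1) ^ (wsum f + wsum g) * Sdet (conj f) (conj g) m := by
  set ρ := mayaEquiv f n m hf hfn hfm
  set σ := mayaEquiv g n m hg hgn hgm
  set E := map (negVars : MvPolynomial ℕ ℚ →ₐ[ℚ] _).toRingHom hSeries
  set P := (upperToeplitz E (n + m)).submatrix ρ σ
  set Q := (upperToeplitz hSeries (n + m)).submatrix σ ρ
  have hPQ : P * Q = 1 := by
    rw [submatrix_mul_equiv, upperToeplitz_mul, map_negVars_hSeries_mul_hSeries,
      upperToeplitz_one, submatrix_one_equiv]
  have hE : constantCoeff E = 1 := by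
    rw [← coeff_zero_eq_constantCoeff_apply, coeff_map, hSeries, coeff_mk, hp_zero, map_one]
  have hP : P.det = (-1) ^ (wsum f + wsum g) := by
    rw [det_submatrix_equiv, det_upperToeplitz, hE, one_pow, mul_one,
      hf.sign_mayaEquiv_symm_trans hg]
    push_cast
    rfl
  have hQ₁₁ : Q.toBlocks₁₁ = (of fun i j : Fin n =>
      hInt ((f i : ℤ) - (g j : ℤ) - (i : ℤ) + (j : ℤ)))ᵀ := by
    refine Matrix.ext fun i j => ?_
    have := i.isLt
    have := j.isLt
    simp only [toBlocks₁₁, of_apply, transpose_apply, Q, submatrix_apply,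
      upperToeplitz_hSeries_apply, ρ, σ, mayaEquiv_inl, rowPos]
    congr 1
    omega
  have hP₂₂ : P.toBlocks₂₂ = (of fun i j : Fin m =>
      hInt ((conj f i : ℤ) - (conj g j : ℤ) - (i : ℤ) + (j : ℤ))).map negVars := by
    refine Matrix.ext fun i j => ?_
    have := hf.conj_le_plen i
    have := hg.conj_le_plen j
    simp only [toBlocks₂₂, of_apply, map_apply, P, E, submatrix_apply,
      upperToeplitz_map_negVars_hSeries_apply, ρ, σ, mayaEquiv_inr, colPos]
    congr 2
    omega
  have hJacobi := det_mul_det_toBlocks₁₁_of_mul_eq_one hPQ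
  rw [hP, hQ₁₁, det_transpose, hP₂₂, ← AlgHom.mapMatrix_apply, ← AlgHom.map_det] at hJacobi
  change (-1) ^ (wsum f + wsum g) * Sdet f g n = negVars (Sdet (conj f) (conj g) m) at hJacobi
  rw [← negVars_negVars (Sdet (conj f) (conj g) m), ← hJacobi, map_mul, map_pow, map_neg,
    map_one, neg_one_pow_mul_neg_one_pow_mul]

end Duality

section Specialization

open MvPolynomial (negVars aeval_negVars)

variable {ι : RatFunc ℚ ≃+* RatFunc ℚ}

lemma iota_X_zpow (hι : ι RatFunc.X = RatFunc.X⁻¹) (z : ℤ) :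
    ι (RatFunc.X ^ z) = RatFunc.X ^ (-z) := by
  rw [map_zpow₀, hι, inv_zpow, zpow_neg]

lemma iota_Pspec (hι : ι RatFunc.X = RatFunc.X⁻¹) (k : ℕ) : ι (Pspec k) = -Pspec k := by
  rw [Pspec, map_inv₀, map_sub, iota_X_zpow hι, iota_X_zpow hι, neg_neg, ← inv_neg, neg_sub]

lemma iota_aeval_Pspec (hι : ι RatFunc.X = RatFunc.X⁻¹) (p : MvPolynomial ℕ ℚ) :
    ι (MvPolynomial.aeval Pspec p) = MvPolynomial.aeval Pspec (negVars p) := by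
  change ((ι : RatFunc ℚ →+* RatFunc ℚ).toRatAlgHom.comp (MvPolynomial.aeval Pspec)) p = _
  rw [MvPolynomial.comp_aeval, aeval_negVars]
  exact congrArg (MvPolynomial.aeval · p) (funext (iota_Pspec hι))

lemma IsPartition.iota_Seval (hι : ι RatFunc.X = RatFunc.X⁻¹) {f g : ℕ → ℕ} {n m : ℕ}
    (hf : IsPartition f) (hg : IsPartition g)
    (hfn : plen f ≤ n) (hgn : plen g ≤ n) (hfm : f 0 ≤ m) (hgm : g 0 ≤ m) :
    ι (Seval f g n) = (-1) ^ (wsum f + wsum g) * Seval (conj f) (conj g) m := by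
  rw [Seval, iota_aeval_Pspec hι, hf.negVars_Sdet hg hfn hgn hfm hgm, map_mul, map_pow, map_neg,
    map_one, Seval]

end Specialization

def IsPartition.toNPartition {f : ℕ → ℕ} (hf : IsPartition f) : NPartition :=
  ⟨f, hf.antitone, hf.eventually_zero⟩

noncomputable def NPartition.transpose (η : NPartition) : NPartition :=
  η.isPartition.conjugate.toNPartition

lemma NPartition.transpose_part (η : NPartition) : η.transpose.part = conj η.part := rfl

lemma NPartition.transpose_involutive : Function.Involutive NPartition.transpose :=
  fun η => NPartition.ext η.isPartition.conj_conj

noncomputable def vertexTerm (f g : ℕ → ℕ) (η : NPartition) : RatFunc ℚ :=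
  Seval (conj f) η.part (max (f 0) (max (g 0) (plen η.part))) *
    Seval (conj g) η.part (max (f 0) (max (g 0) (plen η.part)))

lemma Wtl_eq_mul_finsum_vertexTerm (f g : ℕ → ℕ) :
    Wtl f g = RatFunc.X ^ (kappa f + kappa g) * ∑ᶠ η, vertexTerm f g η := rfl

lemma IsPartition.iota_vertexTerm_transpose {ι : RatFunc ℚ ≃+* RatFunc ℚ}
    (hι : ι RatFunc.X = RatFunc.X⁻¹) {f g : ℕ → ℕ} (hf : IsPartition f) (hg : IsPartition g)
    (η : NPartition) :
    ι (vertexTerm (conj f) (conj g) η.transpose) =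
      (-1) ^ (wsum f + wsum g) * vertexTerm f g η := by
  have hη := η.isPartition
  have hfn : plen f ≤ max (conj f 0) (max (conj g 0) (plen (conj η.part))) := by
    rw [plen_eq_conj_zero]; exact le_max_left _ _
  have hgn : plen g ≤ max (conj f 0) (max (conj g 0) (plen (conj η.part))) := by
    rw [plen_eq_conj_zero]; exact (le_max_left _ _).trans (le_max_right _ _)
  have hηn : plen (conj η.part) ≤ max (conj f 0) (max (conj g 0) (plen (conj η.part))) :=
    (le_max_right _ _).trans (le_max_right _ _)
  have hηm : conj η.part 0 ≤ max (f 0) (max (g 0) (plen η.part)) := by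
    rw [← plen_eq_conj_zero]; exact (le_max_right _ _).trans (le_max_right _ _)
  rw [vertexTerm, vertexTerm, NPartition.transpose_part, hf.conj_conj, hg.conj_conj, map_mul,
    hf.iota_Seval hι hη.conjugate hfn hηn (le_max_left _ _) hηm,
    hg.iota_Seval hι hη.conjugate hgn hηn ((le_max_left _ _).trans (le_max_right _ _)) hηm,
    hη.conj_conj, mul_mul_mul_comm, ← pow_add, add_add_add_comm, ← two_mul, pow_add, pow_mul,
    neg_one_sq, one_pow, mul_one]

lemma IsPartition.iota_finsum_vertexTerm_conj {ι : RatFunc ℚ ≃+* RatFunc ℚ}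
    (hι : ι RatFunc.X = RatFunc.X⁻¹) {f g : ℕ → ℕ} (hf : IsPartition f) (hg : IsPartition g) :
    ι (∑ᶠ η, vertexTerm (conj f) (conj g) η) =
      (-1) ^ (wsum f + wsum g) * ∑ᶠ η, vertexTerm f g η := by
  rw [AddEquivClass.map_finsum, ← finsum_comp_equiv (NPartition.transpose_involutive.toPerm _),
    mul_finsum]
  exact finsum_congr (hf.iota_vertexTerm_transpose hι hg)

/-- Inversion symmetry of the two-leg topological vertex:
`W_{ν ν̄}(w) = (−1)^{|ν|+|ν̄|} ι(W_{νᵀ ν̄ᵀ}(w))` where ι is the field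
automorphism of `ℚ(w)` with `ι(w) = w⁻¹`. -/
theorem topological_vertex_inversion (ν νb : NPartition)
    (ι : RatFunc ℚ ≃+* RatFunc ℚ) (hι : ι RatFunc.X = RatFunc.X⁻¹) :
    Wtl ν.part νb.part
      = (-1) ^ (wsum ν.part + wsum νb.part) *
          ι (Wtl (conj ν.part) (conj νb.part)) := by
  have hν := ν.isPartition
  have hνb := νb.isPartition
  rw [Wtl_eq_mul_finsum_vertexTerm, Wtl_eq_mul_finsum_vertexTerm, map_mul, iota_X_zpow hι,
    hν.kappa_conj, hνb.kappa_conj, neg_add, neg_neg, neg_neg,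
    hν.iota_finsum_vertexTerm_conj hι hνb, mul_left_comm, neg_one_pow_mul_neg_one_pow_mul]
end

section
/- Let α be a real number and let c_n, d_n : ℝ → ℂ (n = 0, 1, 2, …) be families of functions with c_0 identically 1. Suppose that for every finitely supported function f : ℝ → ℂ and every s ∈ ℝ one has Σ_{n≥0} c_n(s) f(s + α − n) = −Σ_{n≥0} d_n(s) f(s + α − 1 + n) (both sums have only finitely many nonzero terms). Then c_n = 0 for all n ≥ 2, d_n = 0 for all n ≥ 2, d_1 is identically −1, and d_0 = −c_1; that is, Σ_n c_n(s)f(s+α−n) = f(s+α) + c_1(s) f(s+α−1). -/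
/-- If an operator supported on the shifts `α − n` (n ∈ ℕ, with leading
coefficient `c_0 = 1`) coincides, on all finitely supported functions, with
the negative of an operator supported on the shifts `α − 1 + n` (n ∈ ℕ),
then only the two common shifts `α` and `α − 1` survive:
`c_n = 0` for `n ≥ 2`, `d_n = 0` for `n ≥ 2`, `d_1 ≡ −1` and `d_0 = −c_1`. -/
theorem two_terms_survive (α : ℝ) (c d : ℕ → ℝ → ℂ)
    (hc0 : ∀ s : ℝ, c 0 s = 1)
    (h : ∀ f : ℝ → ℂ, (Function.support f).Finite → ∀ s : ℝ,
        ∑ᶠ n : ℕ, c n s * f (s + α - n)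
          = - ∑ᶠ n : ℕ, d n s * f (s + α - 1 + n)) :
    (∀ n : ℕ, 2 ≤ n → ∀ s : ℝ, c n s = 0) ∧
    (∀ n : ℕ, 2 ≤ n → ∀ s : ℝ, d n s = 0) ∧
    (∀ s : ℝ, d 1 s = -1) ∧
    (∀ s : ℝ, d 0 s = - c 1 s) := by
  have key : ∀ (s t : ℝ),
      (∑ᶠ n : ℕ, c n s * (if s + α - n = t then (1:ℂ) else 0))
        = - ∑ᶠ n : ℕ, d n s * (if s + α - 1 + n = t then (1:ℂ) else 0) := by
    intro s t
    have hfin : (Function.support (fun x : ℝ => if x = t then (1:ℂ) else 0)).Finite := by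
      apply Set.Finite.subset (Set.finite_singleton t)
      intro x hx
      by_contra hxt
      simp only [Set.mem_singleton_iff] at hxt
      simp [Function.mem_support, hxt] at hx
    exact h (fun x => if x = t then 1 else 0) hfin s
  have sumc : ∀ (s t : ℝ) (k : ℕ), s + α - k = t →
      (∑ᶠ n : ℕ, c n s * (if s + α - n = t then (1:ℂ) else 0)) = c k s := by
    intro s t k hk
    rw [finsum_eq_single _ k]
    · simp [hk]
    · intro b hb
      have hne : s + α - (b:ℝ) ≠ t := by
        intro hEq
        apply hb
        have : (b:ℝ) = (k:ℝ) := by linarith [hk, hEq]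
        exact_mod_cast this
      simp [hne]
  have sumd : ∀ (s t : ℝ) (k : ℕ), s + α - 1 + k = t →
      (∑ᶠ n : ℕ, d n s * (if s + α - 1 + n = t then (1:ℂ) else 0)) = d k s := by
    intro s t k hk
    rw [finsum_eq_single _ k]
    · simp [hk]
    · intro b hb
      have hne : s + α - 1 + (b:ℝ) ≠ t := by
        intro hEq
        apply hb
        have : (b:ℝ) = (k:ℝ) := by linarith [hk, hEq]
        exact_mod_cast this
      simp [hne]
  have zeroc : ∀ (s t : ℝ), (∀ n : ℕ, s + α - n ≠ t) →
      (∑ᶠ n : ℕ, c n s * (if s + α - n = t then (1:ℂ) else 0)) = 0 := by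
    intro s t ht
    apply finsum_eq_zero_of_forall_eq_zero
    intro n
    simp [ht n]
  have zerod : ∀ (s t : ℝ), (∀ n : ℕ, s + α - 1 + n ≠ t) →
      (∑ᶠ n : ℕ, d n s * (if s + α - 1 + n = t then (1:ℂ) else 0)) = 0 := by
    intro s t ht
    apply finsum_eq_zero_of_forall_eq_zero
    intro n
    simp [ht n]
  refine ⟨?_, ?_, ?_, ?_⟩
  · intro k hk s
    have hkey := key s (s + α - k)
    rw [sumc s _ k rfl, zerod s (s + α - k) ?_] at hkey
    · simpa using hkey
    · intro n hn
      have hn' : (n:ℝ) = 1 - k := by linarith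
      have hk2 : (2:ℝ) ≤ (k:ℝ) := by exact_mod_cast hk
      have : (0:ℝ) ≤ (n:ℝ) := n.cast_nonneg
      linarith
  · intro k hk s
    have hkey := key s (s + α - 1 + k)
    rw [sumd s _ k rfl, zeroc s (s + α - 1 + k) ?_] at hkey
    · have := hkey.symm
      simpa using this
    · intro n hn
      have hn' : (n:ℝ) = 1 - k := by linarith
      have hk2 : (2:ℝ) ≤ (k:ℝ) := by exact_mod_cast hk
      have : (0:ℝ) ≤ (n:ℝ) := n.cast_nonneg
      linarith
  · intro s
    have hkey := key s (s + α)
    rw [sumc s _ 0 (by push_cast; ring), sumd s _ 1 (by push_cast; ring)] at hkey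
    rw [hc0 s] at hkey
    linear_combination hkey
  · intro s
    have hkey := key s (s + α - 1)
    rw [sumc s _ 1 (by push_cast; ring), sumd s _ 0 (by push_cast; ring)] at hkey
    linear_combination hkey
end

section
/- Let a, b be positive integers, N = a + b, and let u : ℝ → ℂ be any function. Let X = T_{a/N} − M_u ∘ T_{−b/N} as a linear operator on complex-valued functions on ℝ. Then there exist functions c_{−b}, c_{−b+1}, …, c_a : ℝ → ℂ such that X^N = Σ_{n=−b}^{a} M_{c_n} ∘ T_n, where moreover c_a is identically 1 and c_{−b}(s) = (−1)^N ∏_{k=0}^{N−1} u(s − k b/N). In particular X^N involves only integer shifts between −b and a. -/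
/-- The shift operator `(T_α f)(s) = f (s + α)` on complex-valued functions
of a real variable, as a ℂ-linear endomorphism. -/
def Tshift (α : ℝ) : Module.End ℂ (ℝ → ℂ) where
  toFun f := fun s => f (s + α)
  map_add' := by intros; rfl
  map_smul' := by intros; rfl

/-- The multiplication operator `(M_g f)(s) = g s * f s`, as a ℂ-linear
endomorphism. -/
def Mmult (g : ℝ → ℂ) : Module.End ℂ (ℝ → ℂ) where
  toFun f := fun s => g s * f s
  map_add' := by intros; funext s; simp [mul_add]
  map_smul' := by intros; funext s; simp [smul_eq_mul]; ring

namespace BINaux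

/-- Combined operator `M_g ∘ T_α`. -/
noncomputable def MT (g : ℝ → ℂ) (α : ℝ) : Module.End ℂ (ℝ → ℂ) := Mmult g * Tshift α

lemma MT_apply (g : ℝ → ℂ) (α : ℝ) (f : ℝ → ℂ) (s : ℝ) :
    MT g α f s = g s * f (s + α) := rfl

lemma MT_mul (g h : ℝ → ℂ) (α β : ℝ) :
    MT g α * MT h β = MT (fun s => g s * h (s + α)) (α + β) := by
  ext f s
  simp [MT_apply, Module.End.mul_apply, mul_assoc, add_assoc]

lemma MT_sub (g h : ℝ → ℂ) (α : ℝ) :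
    MT (fun s => g s - h s) α = MT g α - MT h α := by
  ext f s
  show (g s - h s) * f (s + α) = (MT g α - MT h α) f s
  simp [MT_apply, sub_mul]

lemma MT_zero (α : ℝ) : MT (fun _ => (0:ℂ)) α = 0 := by
  ext f s
  show (0:ℂ) * f (s + α) = (0 : Module.End ℂ (ℝ → ℂ)) f s
  simp

lemma MT_one : MT (fun _ => (1:ℂ)) 0 = 1 := by
  ext f s
  show (1:ℂ) * f (s + 0) = f s
  simp

lemma Tshift_eq (α : ℝ) : Tshift α = MT (fun _ => (1:ℂ)) α := by
  ext f s
  show f (s + α) = (1:ℂ) * f (s + α)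
  simp

/-- The shift exponent after `m` steps, `j` of which are of the second kind. -/
def sh (p q : ℝ) (m j : ℕ) : ℝ := ((m:ℝ) - (j:ℝ)) * p - (j:ℝ) * q

/-- Coefficients of `X^m`. -/
def d (u : ℝ → ℂ) (p q : ℝ) : ℕ → ℕ → ℝ → ℂ
  | 0, 0 => fun _ => 1
  | 0, _+1 => fun _ => 0
  | m+1, 0 => fun s => d u p q m 0 (s + p)
  | m+1, j+1 => fun s => d u p q m (j+1) (s + p) - u s * d u p q m j (s - q)

variable (u : ℝ → ℂ) (p q : ℝ)

lemma d_of_gt : ∀ m j, m < j → d u p q m j = fun _ => 0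
  | 0, _+1, _ => rfl
  | m+1, j+1, h => by
      funext s
      have h1 : d u p q m (j+1) = fun _ => 0 := d_of_gt m (j+1) (by omega)
      have h2 : d u p q m j = fun _ => 0 := d_of_gt m j (by omega)
      show d u p q m (j+1) (s + p) - u s * d u p q m j (s - q) = 0
      rw [h1, h2]
      simp

lemma d_left : ∀ m, d u p q m 0 = fun _ => 1
  | 0 => rfl
  | m+1 => by
      funext s
      show d u p q m 0 (s + p) = 1
      rw [d_left m]

lemma d_right : ∀ m, d u p q m m
    = fun s => (-1)^m * ∏ k ∈ Finset.range m, u (s - (k:ℝ) * q)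
  | 0 => by funext s; simp [d]
  | m+1 => by
      funext s
      have h0 : d u p q m (m+1) = fun _ => 0 := d_of_gt u p q m (m+1) (by omega)
      show d u p q m (m+1) (s + p) - u s * d u p q m m (s - q) = _
      rw [h0, d_right m, Finset.prod_range_succ']
      have hp : ∏ k ∈ Finset.range m, u (s - q - (k:ℝ) * q)
          = ∏ k ∈ Finset.range m, u (s - ((k:ℕ)+1:ℕ) * q) := by
        refine Finset.prod_congr rfl fun k _ => ?_
        congr 1; push_cast; ring
      rw [← hp]
      have h00 : s - ((0:ℕ):ℝ) * q = s := by push_cast; ring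
      rw [h00]
      ring

lemma pow_eq : ∀ m, (MT (fun _ => (1:ℂ)) p - MT u (-q)) ^ m
    = ∑ j ∈ Finset.range (m+1), MT (d u p q m j) (sh p q m j)
  | 0 => by
      rw [pow_zero, Finset.sum_range_one]
      have : sh p q 0 0 = 0 := by simp [sh]
      rw [this]
      exact MT_one.symm
  | m+1 => by
      have hA : ∀ j : ℕ,
          MT (fun _ => (1:ℂ)) p * MT (d u p q m j) (sh p q m j)
            = MT (fun s => d u p q m j (s + p)) (sh p q (m+1) j) := by
        intro j
        rw [MT_mul]
        have h1 : (fun s => (1:ℂ) * d u p q m j (s + p))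
            = fun s => d u p q m j (s + p) := by funext s; rw [one_mul]
        have h2 : p + sh p q m j = sh p q (m+1) j := by
          simp only [sh]; push_cast; ring
        rw [h1, h2]
      have hB : ∀ j : ℕ,
          MT u (-q) * MT (d u p q m j) (sh p q m j)
            = MT (fun s => u s * d u p q m j (s - q)) (sh p q (m+1) (j+1)) := by
        intro j
        rw [MT_mul]
        have h1 : (fun s => u s * d u p q m j (s + -q))
            = fun s => u s * d u p q m j (s - q) := by
          funext s; rw [sub_eq_add_neg]
        have h2 : -q + sh p q m j = sh p q (m+1) (j+1) := by
          simp only [sh]; push_cast; ring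
        rw [h1, h2]
      rw [pow_succ', pow_eq m, sub_mul, Finset.mul_sum, Finset.mul_sum,
        Finset.sum_congr rfl (fun j _ => hA j),
        Finset.sum_congr rfl (fun j _ => hB j),
        Finset.sum_range_succ'
          (fun j => MT (d u p q (m+1) j) (sh p q (m+1) j)) (m+1)]
      have hd : ∀ j : ℕ,
          MT (d u p q (m+1) (j+1)) (sh p q (m+1) (j+1))
            = MT (fun s => d u p q m (j+1) (s + p)) (sh p q (m+1) (j+1))
              - MT (fun s => u s * d u p q m j (s - q)) (sh p q (m+1) (j+1)) := by
        intro j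
        rw [show d u p q (m+1) (j+1)
            = fun s => d u p q m (j+1) (s + p) - u s * d u p q m j (s - q) from rfl,
          MT_sub]
      rw [Finset.sum_congr rfl (fun j _ => hd j), Finset.sum_sub_distrib]
      have hd0 : d u p q (m+1) 0 = fun s => d u p q m 0 (s + p) := rfl
      rw [hd0]
      have hAz : MT (fun s => d u p q m (m+1) (s + p)) (sh p q (m+1) (m+1)) = 0 := by
        rw [d_of_gt u p q m (m+1) (by omega)]
        exact MT_zero _
      have hS : ∑ j ∈ Finset.range (m+1),
            MT (fun s => d u p q m j (s + p)) (sh p q (m+1) j)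
          = (∑ j ∈ Finset.range (m+1),
              MT (fun s => d u p q m (j+1) (s + p)) (sh p q (m+1) (j+1)))
            + MT (fun s => d u p q m 0 (s + p)) (sh p q (m+1) 0) := by
        have h1 := Finset.sum_range_succ
          (fun j => MT (fun s => d u p q m j (s + p)) (sh p q (m+1) j)) (m+1)
        have h2 := Finset.sum_range_succ'
          (fun j => MT (fun s => d u p q m j (s + p)) (sh p q (m+1) j)) (m+1)
        rw [hAz, add_zero] at h1
        rw [← h1, h2]
      rw [hS]
      abel

end BINaux

open BINaux in
/-- For `X = T_{a/N} − M_u ∘ T_{−b/N}` with `N = a + b`, the power `X^N`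
involves only the integer shifts `−b, …, a`:
`X^N = Σ_{n=−b}^{a} M_{c_n} ∘ T_n` with `c_a ≡ 1` and
`c_{−b}(s) = (−1)^N ∏_{k=0}^{N−1} u(s − k b/N)`. -/
theorem BIN_power_integer_shifts (a b : ℕ) (ha : 0 < a) (hb : 0 < b)
    (u : ℝ → ℂ) :
    ∃ c : ℤ → ℝ → ℂ,
      (Tshift ((a : ℝ) / ((a : ℝ) + (b : ℝ))) -
         Mmult u * Tshift (-((b : ℝ) / ((a : ℝ) + (b : ℝ))))) ^ (a + b)
        = ∑ n ∈ Finset.Icc (-(b : ℤ)) (a : ℤ), Mmult (c n) * Tshift (n : ℝ) ∧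
      (∀ s : ℝ, c (a : ℤ) s = 1) ∧
      (∀ s : ℝ, c (-(b : ℤ)) s
        = (-1) ^ (a + b) *
            ∏ k ∈ Finset.range (a + b),
              u (s - (k : ℝ) * (b : ℝ) / ((a : ℝ) + (b : ℝ)))) := by
  classical
  set N := a + b with hN
  set p : ℝ := (a : ℝ) / ((a : ℝ) + (b : ℝ)) with hp
  set q : ℝ := (b : ℝ) / ((a : ℝ) + (b : ℝ)) with hq
  have hab : (a : ℝ) + (b : ℝ) ≠ 0 := by positivity
  refine ⟨fun n => d u p q N ((a : ℤ) - n).toNat, ?_, ?_, ?_⟩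
  · have hX : Tshift p - Mmult u * Tshift (-q)
        = MT (fun _ => (1:ℂ)) p - MT u (-q) := by
      rw [Tshift_eq]; rfl
    rw [hX, pow_eq u p q N]
    have hsh : ∀ j : ℕ, j ≤ N → sh p q N j = ((a : ℝ) - (j : ℝ)) := by
      intro j hj
      simp only [sh, hp, hq, hN]
      push_cast
      field_simp
      ring
    refine Finset.sum_nbij' (i := fun j => (a : ℤ) - (j : ℕ))
      (j := fun n => ((a : ℤ) - n).toNat) ?_ ?_ ?_ ?_ ?_
    · intro j hj
      simp only [Finset.mem_range] at hj
      simp only [Finset.mem_Icc]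
      omega
    · intro n hn
      simp only [Finset.mem_Icc] at hn
      simp only [Finset.mem_range]
      omega
    · intro j hj
      simp only [Finset.mem_range] at hj
      show ((a : ℤ) - ((a : ℤ) - ((j:ℕ):ℤ))).toNat = j
      omega
    · intro n hn
      simp only [Finset.mem_Icc] at hn
      show ((a : ℤ) - (((((a : ℤ) - n).toNat : ℕ)) : ℤ)) = n
      omega
    · intro j hj
      simp only [Finset.mem_range] at hj
      show MT (d u p q N j) (sh p q N j)
          = Mmult (d u p q N ((a : ℤ) - ((a : ℤ) - ((j:ℕ):ℤ))).toNat)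
              * Tshift ((((a : ℤ) - ((j:ℕ):ℤ)) : ℤ) : ℝ)
      have h1 : (((a : ℤ) - ((a : ℤ) - ((j:ℕ):ℤ))).toNat) = j := by omega
      have h2 : ((((a : ℤ) - ((j:ℕ):ℤ)) : ℤ) : ℝ) = (a : ℝ) - (j : ℝ) := by
        push_cast; ring
      rw [h1, h2, hsh j (by omega)]
      rfl
  · intro s
    show d u p q N ((a : ℤ) - ((a:ℕ) : ℤ)).toNat s = 1
    have h1 : (((a : ℤ) - ((a:ℕ) : ℤ)).toNat) = 0 := by omega
    rw [h1, d_left]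
  · intro s
    show d u p q N ((a : ℤ) - (-((b:ℕ) : ℤ))).toNat s = _
    have h1 : (((a : ℤ) - (-((b:ℕ) : ℤ))).toNat) = N := by omega
    rw [h1, d_right]
    simp only [hN]
    congr 1
    refine Finset.prod_congr rfl fun k _ => ?_
    congr 1
    rw [hq]
    ring
end

section
/- Let a > b ≥ 1 be integers, N = a − b, and let u : ℝ → ℂ be any function. Let X = T_{a/N} − M_u ∘ T_{b/N} as a linear operator on complex-valued functions on ℝ. Then there exist functions c_b, c_{b+1}, …, c_a : ℝ → ℂ such that X^N = Σ_{n=b}^{a} M_{c_n} ∘ T_n, where moreover c_a is identically 1 and c_b(s) = (−1)^N ∏_{k=0}^{N−1} u(s + k b/N). In particular X^N involves only positive integer shifts, all lying between b and a. -/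
/-!
Write `X = T_α − M_u T_β`. Moving shifts to the right with `T_γ M_g = M_{g(· + γ)} T_γ`,
`X^m = ∑_{j ≤ m} M_{c_{m,j}} T_{mα − j(α − β)}`, where `j` counts the factors `M_u T_β`
and the coefficients obey a Pascal-type recursion with `c_{m,0} = 1` and
`c_{m,m}(s) = (−1)^m ∏_{k<m} u(s + kβ)`. For `α = a/N`, `β = b/N`, `N = a − b` we have
`α − β = 1` and `Nα = a`, so the shifts of `X^N` are the integers `a − j`, `0 ≤ j ≤ N`.
-/

lemma Mmult_zero : Mmult 0 = 0 := by
  ext f s; simp [Mmult]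

lemma Mmult_sub (g h : ℝ → ℂ) : Mmult (g - h) = Mmult g - Mmult h := by
  ext f s; simp [Mmult, sub_mul]

lemma Mmult_one_mul_Tshift_zero : Mmult 1 * Tshift 0 = 1 := by
  ext f s; simp [Mmult, Tshift]

lemma Tshift_mul_Mmult_mul_Tshift (α γ : ℝ) (g : ℝ → ℂ) :
    Tshift α * (Mmult g * Tshift γ) = Mmult (fun s => g (s + α)) * Tshift (α + γ) := by
  ext f s; simp [Mmult, Tshift, add_assoc]

lemma Mmult_mul_Tshift_mul_Mmult_mul_Tshift (β γ : ℝ) (g h : ℝ → ℂ) :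
    Mmult g * Tshift β * (Mmult h * Tshift γ)
      = Mmult (fun s => g s * h (s + β)) * Tshift (β + γ) := by
  ext f s; simp [Mmult, Tshift, mul_assoc, add_assoc]

/-- `shiftCoeff u α β m j` is the coefficient of `T_{mα − j(α − β)}` in `(T_α − M_u T_β)^m`. -/
noncomputable def shiftCoeff (u : ℝ → ℂ) (α β : ℝ) : ℕ → ℕ → ℝ → ℂ
  | 0, 0 => 1
  | 0, _ + 1 => 0
  | m + 1, 0 => fun s => shiftCoeff u α β m 0 (s + α)
  | m + 1, j + 1 => fun s =>
      shiftCoeff u α β m (j + 1) (s + α) - u s * shiftCoeff u α β m j (s + β)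

namespace shiftCoeff

variable (u : ℝ → ℂ) (α β : ℝ)

lemma eq_zero_of_lt : ∀ {m j : ℕ}, m < j → shiftCoeff u α β m j = 0
  | 0, _ + 1, _ => rfl
  | m + 1, j + 1, h => by
    funext s
    simp [shiftCoeff, eq_zero_of_lt (show m < j + 1 by omega), eq_zero_of_lt (show m < j by omega)]

lemma zero_right : ∀ m : ℕ, shiftCoeff u α β m 0 = 1
  | 0 => rfl
  | m + 1 => by funext s; simp [shiftCoeff, zero_right m]

lemma diag : ∀ (m : ℕ) (s : ℝ),
    shiftCoeff u α β m m s = (-1) ^ m * ∏ k ∈ Finset.range m, u (s + k * β)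
  | 0, s => by simp [shiftCoeff]
  | m + 1, s => by
    simp only [shiftCoeff, eq_zero_of_lt u α β (Nat.lt_succ_self m), diag m, Pi.zero_apply,
      Finset.prod_range_succ' _ m]
    simp only [Nat.cast_add, Nat.cast_one, add_mul, one_mul, Nat.cast_zero, zero_mul, add_zero,
      add_comm β, add_assoc]
    ring

end shiftCoeff

theorem pow_Tshift_sub_Mmult_mul_Tshift (u : ℝ → ℂ) (α β : ℝ) (m : ℕ) :
    (Tshift α - Mmult u * Tshift β) ^ m
      = ∑ j ∈ Finset.range (m + 1),
          Mmult (shiftCoeff u α β m j) * Tshift (m * α - j * (α - β)) := by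
  induction m with
  | zero => simpa [shiftCoeff] using Mmult_one_mul_Tshift_zero.symm
  | succ m ih =>
    set c := shiftCoeff u α β m
    set γ : ℕ → ℝ := fun j => (m + 1 : ℕ) * α - j * (α - β)
    set G : ℕ → Module.End ℂ (ℝ → ℂ) := fun j => Mmult (fun s => c j (s + α)) * Tshift (γ j)
    set H : ℕ → Module.End ℂ (ℝ → ℂ) :=
      fun j => Mmult (fun s => u s * c j (s + β)) * Tshift (γ (j + 1))
    have hGH : (Tshift α - Mmult u * Tshift β) ^ (m + 1)
        = ∑ j ∈ Finset.range (m + 1), G j - ∑ j ∈ Finset.range (m + 1), H j := by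
      rw [pow_succ', ih, sub_mul, Finset.mul_sum, Finset.mul_sum]
      congr 1 <;> refine Finset.sum_congr rfl fun j _ => ?_
      · rw [Tshift_mul_Mmult_mul_Tshift]; congr 2; simp only [γ]; push_cast; ring
      · rw [Mmult_mul_Tshift_mul_Mmult_mul_Tshift]; congr 2; simp only [γ]; push_cast; ring
    have hG_top : G (m + 1) = 0 := by
      simp [G, c, shiftCoeff.eq_zero_of_lt u α β (Nat.lt_succ_self m), ← Pi.zero_def, Mmult_zero]
    have hG_zero : G 0 = Mmult (shiftCoeff u α β (m + 1) 0) * Tshift (γ 0) := rfl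
    have hG_succ_sub_H (j : ℕ) :
        G (j + 1) - H j = Mmult (shiftCoeff u α β (m + 1) (j + 1)) * Tshift (γ (j + 1)) := by
      rw [← sub_mul, ← Mmult_sub]; rfl
    rw [hGH, Finset.sum_range_succ' _ (m + 1), Finset.sum_range_succ' G,
      ← Finset.sum_range_succ_sub_top, hG_top, sub_zero, add_sub_right_comm,
      ← Finset.sum_sub_distrib]
    exact congrArg₂ (· + ·) (Finset.sum_congr rfl fun j _ => hG_succ_sub_H j) hG_zero

theorem GD_power_integer_shifts_general (a b : ℕ) (hab : b < a)
    (u : ℝ → ℂ) :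
    ∃ c : ℕ → ℝ → ℂ,
      (Tshift ((a : ℝ) / ((a : ℝ) - (b : ℝ))) -
         Mmult u * Tshift ((b : ℝ) / ((a : ℝ) - (b : ℝ)))) ^ (a - b)
        = ∑ n ∈ Finset.Icc b a, Mmult (c n) * Tshift (n : ℝ) ∧
      (∀ s : ℝ, c a s = 1) ∧
      (∀ s : ℝ, c b s
        = (-1) ^ (a - b) *
            ∏ k ∈ Finset.range (a - b),
              u (s + (k : ℝ) * (b : ℝ) / ((a : ℝ) - (b : ℝ)))) := by
  have hN : (a : ℝ) - b ≠ 0 := sub_ne_zero.mpr (by exact_mod_cast hab.ne')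
  set α : ℝ := a / (a - b)
  set β : ℝ := b / (a - b)
  have hshift (j : ℕ) (hj : j ≤ a) : ((a - b : ℕ) : ℝ) * α - j * (α - β) = ((a - j : ℕ) : ℝ) := by
    rw [Nat.cast_sub hab.le, Nat.cast_sub hj]
    simp only [α, β]
    field_simp [hN]
  refine ⟨fun n => shiftCoeff u α β (a - b) (a - n), ?_, fun s => ?_, fun s => ?_⟩
  · rw [pow_Tshift_sub_Mmult_mul_Tshift]
    refine Finset.sum_nbij' (a - ·) (a - ·) ?_ ?_ ?_ ?_ ?_ <;> intro j hj <;>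
      simp only [Finset.mem_range, Finset.mem_Icc] at hj ⊢
    all_goals try omega
    rw [Nat.sub_sub_self (by omega), hshift j (by omega)]
  · simp [shiftCoeff.zero_right]
  · simp only [shiftCoeff.diag, β, mul_div_assoc]

/-- For `X = T_{a/N} − M_u ∘ T_{b/N}` with `N = a − b` (a > b ≥ 1), the power
`X^N` involves only the positive integer shifts `b, …, a`:
`X^N = Σ_{n=b}^{a} M_{c_n} ∘ T_n` with `c_a ≡ 1` and
`c_b(s) = (−1)^N ∏_{k=0}^{N−1} u(s + k b/N)`. -/
theorem GD_power_integer_shifts (a b : ℕ) (hb : 1 ≤ b) (hab : b < a)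
    (u : ℝ → ℂ) :
    ∃ c : ℕ → ℝ → ℂ,
      (Tshift ((a : ℝ) / ((a : ℝ) - (b : ℝ))) -
         Mmult u * Tshift ((b : ℝ) / ((a : ℝ) - (b : ℝ)))) ^ (a - b)
        = ∑ n ∈ Finset.Icc b a, Mmult (c n) * Tshift (n : ℝ) ∧
      (∀ s : ℝ, c a s = 1) ∧
      (∀ s : ℝ, c b s
        = (-1) ^ (a - b) *
            ∏ k ∈ Finset.range (a - b),
              u (s + (k : ℝ) * (b : ℝ) / ((a : ℝ) - (b : ℝ)))) :=
  GD_power_integer_shifts_general a b hab u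
end

section
/- Let e(s) = q^s and g₁(s) = q^{(τ+1)s − τ − 3/2}. Then on V₊ the operator identity W₀ ∘ M_e = M_e ∘ (Id − M_{g₁} ∘ T_{−1}) ∘ W₀ holds, i.e. the conjugate q^{M₀} = W₀ ∘ M_{q^s} ∘ W₀^{−1} equals q^s (1 − q^{(τ+1)s − τ − 3/2} Λ^{−1}). -/
/-- `a_0 = 1`, `a_n = (−1)^n q^{n²/2} / ∏_{k=1}^n (1 − q^k)`, the coefficients of
`∏_{i=1}^∞ (1 − q^{i−1/2} x) = Σ_{n≥0} a_n x^n`. -/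
noncomputable def acoef (q : ℝ) (n : ℕ) : ℝ :=
  (-1) ^ n * q ^ (((n : ℝ) ^ 2) / 2) / ∏ k ∈ Finset.range n, (1 - q ^ (k + 1))

/-- The dressing operator
`(W₀ f)(s) = Σ_{n≥0} a_n q^{(τ+1) n (2s − n − 1)/2} f(s − n)`,
realizing `q^{(τ+1)(s−1/2)²/2} ∏_{i=1}^∞ (1 − q^{i−1/2} Λ^{−1}) q^{−(τ+1)(s−1/2)²/2}`;
on functions whose support is bounded below the sum has finitely many
nonzero terms. -/
noncomputable def W0 (q τ : ℝ) (f : ℝ → ℂ) : ℝ → ℂ := fun s =>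
  ∑ᶠ n : ℕ,
    ((acoef q n : ℝ) : ℂ) *
      ((q ^ ((τ + 1) * (n : ℝ) * (2 * s - (n : ℝ) - 1) / 2) : ℝ) : ℂ) *
      f (s - (n : ℝ))

lemma prod_ne (q : ℝ) (hq0 : 0 < q) (hq1 : q < 1) (n : ℕ) :
    (∏ k ∈ Finset.range n, (1 - q ^ (k + 1))) ≠ 0 := by
  apply Finset.prod_ne_zero_iff.mpr
  intro k _
  have : q ^ (k+1) < 1 := pow_lt_one₀ hq0.le hq1 (Nat.succ_ne_zero k)
  linarith

lemma acoef_succ (q : ℝ) (hq0 : 0 < q) (hq1 : q < 1) (n : ℕ) :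
    acoef q (n+1) = -(q ^ ((n:ℝ) + 1/2) * acoef q n) / (1 - q ^ (n+1)) := by
  unfold acoef
  rw [Finset.prod_range_succ]
  have h1 : ((((n:ℝ)+1) ^ 2) / 2) = ((n:ℝ)^2)/2 + ((n:ℝ) + 1/2) := by ring
  push_cast
  rw [h1, Real.rpow_add hq0]
  field_simp
  ring

lemma key (q τ s : ℝ) (hq0 : 0 < q) (hq1 : q < 1) (n : ℕ) :
    q ^ s * (acoef q (n+1) * q ^ ((τ+1) * ((n:ℝ)+1) * (2*s - ((n:ℝ)+1) - 1) / 2))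
      - acoef q (n+1) * q ^ ((τ+1) * ((n:ℝ)+1) * (2*s - ((n:ℝ)+1) - 1) / 2)
          * q ^ (s - ((n:ℝ)+1))
    = q ^ s * q ^ ((τ+1)*s - τ - 3/2) *
        (acoef q n * q ^ ((τ+1) * (n:ℝ) * (2*(s-1) - (n:ℝ) - 1) / 2)) := by
  have hD : (1 : ℝ) - q ^ (n+1) ≠ 0 := by
    have : q ^ (n+1) < 1 := pow_lt_one₀ hq0.le hq1 (Nat.succ_ne_zero n)
    linarith
  have hnp : q ^ (n+1) = q ^ (((n:ℝ))+1) := by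
    rw [← Real.rpow_natCast q (n+1)]; push_cast; ring_nf
  have hmul : acoef q (n+1) * (1 - q ^ (n+1)) = -(q ^ ((n:ℝ) + 1/2) * acoef q n) := by
    rw [acoef_succ q hq0 hq1 n]; field_simp
  have hE : q ^ ((n:ℝ)+1/2) * q ^ ((τ+1) * ((n:ℝ)+1) * (2*s - ((n:ℝ)+1) - 1) / 2)
        * q ^ (s - ((n:ℝ)+1))
      = q ^ s * q ^ ((τ+1)*s - τ - 3/2)
        * q ^ ((τ+1) * (n:ℝ) * (2*(s-1) - (n:ℝ) - 1) / 2) := by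
    rw [← Real.rpow_add hq0, ← Real.rpow_add hq0, ← Real.rpow_add hq0, ← Real.rpow_add hq0]
    congr 1; ring
  have hs : q ^ s = q ^ (s - ((n:ℝ)+1)) * q ^ ((n:ℝ)+1) := by
    rw [← Real.rpow_add hq0]; ring_nf
  have step : q ^ s * (acoef q (n+1) * q ^ ((τ+1) * ((n:ℝ)+1) * (2*s - ((n:ℝ)+1) - 1) / 2))
      - acoef q (n+1) * q ^ ((τ+1) * ((n:ℝ)+1) * (2*s - ((n:ℝ)+1) - 1) / 2)
          * q ^ (s - ((n:ℝ)+1))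
      = -(acoef q (n+1) * (1 - q ^ (n+1)))
          * (q ^ ((τ+1) * ((n:ℝ)+1) * (2*s - ((n:ℝ)+1) - 1) / 2) * q ^ (s - ((n:ℝ)+1))) := by
    rw [hnp, hs]; ring
  rw [step, hmul]
  linear_combination (acoef q n) * hE

/-- On `V₊` (functions with support bounded below),
`W₀ ∘ M_{q^s} = M_{q^s} ∘ (Id − M_{g₁} ∘ T_{−1}) ∘ W₀` with
`g₁(s) = q^{(τ+1)s − τ − 3/2}`; i.e.
`q^{M₀} = W₀ ∘ M_{q^s} ∘ W₀^{−1} = q^s (1 − q^{(τ+1)s − τ − 3/2} Λ^{−1})`. -/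
theorem qM0_formula (q τ : ℝ) (hq0 : 0 < q) (hq1 : q < 1) (hτ : τ ≠ -1)
    (f : ℝ → ℂ) (hf : BddBelow (Function.support f)) (s : ℝ) :
    W0 q τ (fun t => ((q ^ t : ℝ) : ℂ) * f t) s
      = ((q ^ s : ℝ) : ℂ) *
          (W0 q τ f s -
            ((q ^ ((τ + 1) * s - τ - 3/2) : ℝ) : ℂ) * W0 q τ f (s - 1)) := by
  obtain ⟨c, hc⟩ := hf
  have hf0 : ∀ t : ℝ, t < c → f t = 0 := by
    intro t ht
    by_contra h
    exact absurd (hc h) (not_le.mpr ht)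
  set N : ℕ := ⌈s - c⌉₊ + 1 with hNdef
  have hvan : ∀ n : ℕ, N ≤ n → f (s - (n : ℝ)) = 0 := by
    intro n hn
    apply hf0
    have h1 : s - c ≤ (⌈s - c⌉₊ : ℝ) := Nat.le_ceil _
    have h2 : (N : ℝ) ≤ (n : ℝ) := by exact_mod_cast hn
    have h3 : (N : ℝ) = (⌈s - c⌉₊ : ℝ) + 1 := by push_cast [hNdef]; ring
    linarith
  -- term functions
  set A : ℕ → ℂ := fun n =>
    ((acoef q n : ℝ) : ℂ) *
      ((q ^ ((τ + 1) * (n : ℝ) * (2 * s - (n : ℝ) - 1) / 2) : ℝ) : ℂ) *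
      (((q ^ (s - (n : ℝ)) : ℝ) : ℂ) * f (s - (n : ℝ))) with hA
  set B : ℕ → ℂ := fun n =>
    ((acoef q n : ℝ) : ℂ) *
      ((q ^ ((τ + 1) * (n : ℝ) * (2 * s - (n : ℝ) - 1) / 2) : ℝ) : ℂ) *
      f (s - (n : ℝ)) with hB
  set C : ℕ → ℂ := fun n =>
    ((acoef q n : ℝ) : ℂ) *
      ((q ^ ((τ + 1) * (n : ℝ) * (2 * (s - 1) - (n : ℝ) - 1) / 2) : ℝ) : ℂ) *
      f (s - 1 - (n : ℝ)) with hC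
  have hAsum : W0 q τ (fun t => ((q ^ t : ℝ) : ℂ) * f t) s
      = ∑ n ∈ Finset.range (N + 1), A n := by
    apply finsum_eq_sum_of_support_subset
    intro n hn
    simp only [Finset.coe_range, Set.mem_Iio]
    by_contra h
    push_neg at h
    have : f (s - (n : ℝ)) = 0 := hvan n (by omega)
    simp [hA, this] at hn
  have hBsum : W0 q τ f s = ∑ n ∈ Finset.range (N + 1), B n := by
    apply finsum_eq_sum_of_support_subset
    intro n hn
    simp only [Finset.coe_range, Set.mem_Iio]
    by_contra h
    push_neg at h
    have : f (s - (n : ℝ)) = 0 := hvan n (by omega)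
    simp [hB, this] at hn
  have hCsum : W0 q τ f (s - 1) = ∑ n ∈ Finset.range (N + 1), C n := by
    have hC' : ∀ n : ℕ, N ≤ n → f (s - 1 - (n : ℝ)) = 0 := by
      intro n hn
      apply hf0
      have h1 : s - c ≤ (⌈s - c⌉₊ : ℝ) := Nat.le_ceil _
      have h2 : (N : ℝ) ≤ (n : ℝ) := by exact_mod_cast hn
      have h3 : (N : ℝ) = (⌈s - c⌉₊ : ℝ) + 1 := by push_cast [hNdef]; ring
      linarith
    apply finsum_eq_sum_of_support_subset
    intro n hn
    simp only [Finset.coe_range, Set.mem_Iio]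
    by_contra h
    push_neg at h
    have : f (s - 1 - (n : ℝ)) = 0 := hC' n (by omega)
    simp [hC, this] at hn
  rw [hAsum, hBsum, hCsum]
  -- per-term key identity in ℂ
  have hkeyC : ∀ n : ℕ,
      ((q ^ s : ℝ) : ℂ) * ((q ^ ((τ + 1) * s - τ - 3/2) : ℝ) : ℂ) * C n
        = ((q ^ s : ℝ) : ℂ) * B (n + 1) - A (n + 1) := by
    intro n
    have h := key q τ s hq0 hq1 n
    have hcast : ((q ^ s * (acoef q (n+1) * q ^ ((τ+1) * ((n:ℝ)+1) * (2*s - ((n:ℝ)+1) - 1) / 2))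
        - acoef q (n+1) * q ^ ((τ+1) * ((n:ℝ)+1) * (2*s - ((n:ℝ)+1) - 1) / 2)
          * q ^ (s - ((n:ℝ)+1)) : ℝ) : ℂ)
        = ((q ^ s * q ^ ((τ+1)*s - τ - 3/2) *
            (acoef q n * q ^ ((τ+1) * (n:ℝ) * (2*(s-1) - (n:ℝ) - 1) / 2)) : ℝ) : ℂ) := by
      exact_mod_cast congrArg Complex.ofReal h
    push_cast at hcast
    simp only [hA, hB, hC]
    push_cast
    have harg : s - ((n : ℝ) + 1) = s - 1 - (n : ℝ) := by ring
    rw [harg] at hcast ⊢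
    linear_combination (-(f (s - 1 - (n : ℝ)))) * hcast
  -- sum manipulation
  set D : ℕ → ℂ := fun n => ((q ^ s : ℝ) : ℂ) * B n - A n with hD
  have hsum1 : ∑ n ∈ Finset.range (N + 1),
        ((q ^ s : ℝ) : ℂ) * ((q ^ ((τ + 1) * s - τ - 3/2) : ℝ) : ℂ) * C n
      = ∑ n ∈ Finset.range (N + 1), D (n + 1) :=
    Finset.sum_congr rfl fun n _ => hkeyC n
  have hD0 : D 0 = 0 := by
    simp [hD, hA, hB]
    ring
  have hDN : D (N + 1) = 0 := by
    have h : f (s - ((N + 1 : ℕ) : ℝ)) = 0 := hvan (N + 1) (by omega)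
    simp only [Nat.cast_add, Nat.cast_one] at h
    simp [hD, hA, hB, h]
  have hsum2 : ∑ n ∈ Finset.range (N + 1), D (n + 1)
      = ∑ n ∈ Finset.range (N + 1), D n := by
    have h := Finset.sum_range_succ' D (N + 1)
    rw [Finset.sum_range_succ D (N + 1), hDN, add_zero, hD0, add_zero] at h
    exact h.symm
  rw [mul_sub, Finset.mul_sum, ← mul_assoc, Finset.mul_sum, hsum1, hsum2,
    ← Finset.sum_sub_distrib]
  exact (Finset.sum_congr rfl fun n _ => by simp only [hD]; ring).symm
end

section
/- Let g(s) = q^{(τ+1)s − τ − 1/2}. Then on V₊ the operator identity W₀ ∘ T_{1/(τ+1)} = (T_{1/(τ+1)} − M_g ∘ T_{−τ/(τ+1)}) ∘ W₀ holds, i.e. the initial value L₀^{1/(τ+1)} = W₀ ∘ T_{1/(τ+1)} ∘ W₀^{−1} of the fractional power of the Toda Lax operator equals (1 − q^{(τ+1)s − τ − 1/2} Λ^{−1}) Λ^{1/(τ+1)}. -/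
/-!
Writing `c_n(s) = a_n q^{(τ+1) n (2s − n − 1)/2}` for the coefficients of `W₀`, both sides of
the identity are sums `Σ_n (⋯) f(s + 1/(τ+1) − n)` with finitely many nonzero terms, and
comparing coefficients leaves
`c_{n+1}(s) = c_{n+1}(s + 1/(τ+1)) − q^{(τ+1)s − τ − 1/2} c_n(s − τ/(τ+1))`.
After cancelling the common Gaussian factor this is `a_{n+1} (1 − q^{n+1}) = −q^{n+1/2} a_n`,
the functional equation `P(x) = (1 − q^{1/2} x) P(qx)` of `P(x) = ∏_{i ≥ 1} (1 − q^{i−1/2} x)`.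
-/

open Finset

noncomputable def dressingCoeff (q τ : ℝ) (n : ℕ) (s : ℝ) : ℝ :=
  acoef q n * q ^ ((τ + 1) * (n : ℝ) * (2 * s - (n : ℝ) - 1) / 2)

lemma acoef_succ_mul {q : ℝ} (hq0 : 0 < q) (hq1 : q ≠ 1) (n : ℕ) :
    acoef q (n + 1) * (1 - q ^ (n + 1)) = -q ^ ((n : ℝ) + 1 / 2) * acoef q n := by
  have hfactor : 1 - q ^ (n + 1) ≠ 0 :=
    sub_ne_zero.mpr (Ne.symm ((pow_eq_one_iff_of_nonneg hq0.le n.succ_ne_zero).not.mpr hq1))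
  have hsquare :
      q ^ (((n + 1 : ℕ) : ℝ) ^ 2 / 2) = q ^ ((n : ℝ) ^ 2 / 2) * q ^ ((n : ℝ) + 1 / 2) := by
    rw [← Real.rpow_add hq0]; push_cast; ring_nf
  rw [acoef, acoef, prod_range_succ, hsquare, pow_succ]
  field_simp

lemma dressingCoeff_zero (q τ s : ℝ) : dressingCoeff q τ 0 s = 1 := by
  simp [dressingCoeff, acoef]

lemma dressingCoeff_succ {q τ : ℝ} (hq0 : 0 < q) (hq1 : q ≠ 1) (hτ : τ + 1 ≠ 0) (n : ℕ)
    (s : ℝ) :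
    dressingCoeff q τ (n + 1) s = dressingCoeff q τ (n + 1) (s + 1 / (τ + 1)) -
      q ^ ((τ + 1) * s - τ - 1 / 2) * dressingCoeff q τ n (s + 1 / (τ + 1) - 1) := by
  set E : ℝ := (τ + 1) * ((n : ℝ) + 1) * (2 * s - ((n : ℝ) + 1) - 1) / 2
  have hshift : (τ + 1) * ((n : ℝ) + 1) * (2 * (s + 1 / (τ + 1)) - ((n : ℝ) + 1) - 1) / 2 =
      E + ((n : ℝ) + 1) := by
    field_simp; ring
  have hlower : (τ + 1) * s - τ - 1 / 2 +
      (τ + 1) * (n : ℝ) * (2 * (s + 1 / (τ + 1) - 1) - (n : ℝ) - 1) / 2 =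
      E + ((n : ℝ) + 1 / 2) := by
    field_simp; ring
  have hgauss : q ^ ((τ + 1) * s - τ - 1 / 2) *
      q ^ ((τ + 1) * (n : ℝ) * (2 * (s + 1 / (τ + 1) - 1) - (n : ℝ) - 1) / 2) =
      q ^ E * q ^ ((n : ℝ) + 1 / 2) := by
    rw [← Real.rpow_add hq0, hlower, Real.rpow_add hq0]
  have hrec := acoef_succ_mul hq0 hq1 n
  rw [← Real.rpow_natCast] at hrec
  push_cast at hrec
  simp only [dressingCoeff]
  push_cast
  rw [hshift, Real.rpow_add hq0]
  linear_combination q ^ E * hrec + acoef q n * hgauss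

lemma W0_eq_sum_range {q τ M s : ℝ} {f : ℝ → ℂ} (hM : M ∈ lowerBounds (Function.support f))
    {N : ℕ} (hN : s - M < N) :
    W0 q τ f s = ∑ n ∈ range N, (dressingCoeff q τ n s : ℂ) * f (s - n) := by
  have hsupp : (Function.support fun n : ℕ => (dressingCoeff q τ n s : ℂ) * f (s - n)) ⊆
      range N := by
    intro n hn
    have : M ≤ s - n := hM (right_ne_zero_of_mul hn)
    have : (n : ℝ) < N := by linarith
    simpa using this
  rw [← finsum_eq_sum_of_support_subset _ hsupp]
  simp only [W0, dressingCoeff, Complex.ofReal_mul]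

/-- On `V₊` (functions with support bounded below),
`W₀ ∘ T_{1/(τ+1)} = (T_{1/(τ+1)} − M_g ∘ T_{−τ/(τ+1)}) ∘ W₀` with
`g(s) = q^{(τ+1)s − τ − 1/2}`; i.e. the initial value of the fractional power
of the Toda Lax operator is
`L₀^{1/(τ+1)} = W₀ ∘ T_{1/(τ+1)} ∘ W₀^{−1} = (1 − q^{(τ+1)s − τ − 1/2} Λ^{−1}) Λ^{1/(τ+1)}`. -/
theorem L0_fractional_power_formula (q τ : ℝ) (hq0 : 0 < q) (hq1 : q < 1)
    (hτ : τ ≠ -1)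
    (f : ℝ → ℂ) (hf : BddBelow (Function.support f)) (s : ℝ) :
    W0 q τ (fun t => f (t + 1 / (τ + 1))) s
      = W0 q τ f (s + 1 / (τ + 1)) -
          ((q ^ ((τ + 1) * s - τ - 1/2) : ℝ) : ℂ) * W0 q τ f (s - τ / (τ + 1)) := by
  have hτ1 : τ + 1 ≠ 0 := fun h => hτ (by linarith)
  have hτshift : s - τ / (τ + 1) = s + 1 / (τ + 1) - 1 := by field_simp; ring
  obtain ⟨M, hM⟩ := hf
  obtain ⟨N, hN⟩ := exists_nat_gt (s + 1 / (τ + 1) - M)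
  have hM' : M - 1 / (τ + 1) ∈ lowerBounds (Function.support fun t => f (t + 1 / (τ + 1))) :=
    fun t ht => by linarith [hM ht]
  rw [hτshift, W0_eq_sum_range hM' (N := N + 1) (by push_cast; linarith),
    W0_eq_sum_range hM (N := N + 1) (by push_cast; linarith),
    W0_eq_sum_range hM (N := N) (by linarith), sum_range_succ', sum_range_succ',
    add_sub_right_comm, mul_sum, ← sum_sub_distrib]
  congr 1
  · refine sum_congr rfl fun n _ => ?_
    have hargs : s - ((n + 1 : ℕ) : ℝ) + 1 / (τ + 1) = s + 1 / (τ + 1) - ((n + 1 : ℕ) : ℝ) := by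
      ring
    have hargs' : s + 1 / (τ + 1) - 1 - n = s + 1 / (τ + 1) - ((n + 1 : ℕ) : ℝ) := by
      push_cast; ring
    rw [hargs, hargs', dressingCoeff_succ hq0 hq1.ne hτ1]
    push_cast
    ring
  · simp [dressingCoeff_zero]
end
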